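/- For each k ≥ 1, the graph S_k is a bichain graph: in each part of its bipartition the vertices can be partitioned into two chains (sets whose neighbourhoods are linearly ordered by inclusion); specifically, in each part of S_k the odd-indexed vertices form a chain and the even-indexed vertices form a chain. -/

import Mathlib

def SAdj (k : ℕ) : (Fin k ⊕ Fin k) → (Fin k ⊕ Fin k) → Prop
  | Sum.inl i, Sum.inr j => j.val = i.val ∨ i.val + 2 ≤ j.val
  | Sum.inr j, Sum.inl i => j.val = i.val ∨ i.val + 2 ≤ j.val
  | _, _ => False

/-- The graph `S_k`: vertices `Sum.inl i` are the `x_{i+1}` and `Sum.inr j`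
are the `y_{j+1}` (0-indexed), with `x_i ~ y_j` iff `j = i` or `j ≥ i + 2`. -/
def SG (k : ℕ) : SimpleGraph (Fin k ⊕ Fin k) where
  Adj := SAdj k
  symm := by constructor; rintro (i|i) (j|j) h <;> simp_all [SAdj]
  loopless := by constructor; rintro (i|i) h <;> simp_all [SAdj]

/-! `N(x_j) ⊆ N(x_i)` and `N(y_i) ⊆ N(y_j)` as soon as `j = i` or `j ≥ i + 2`, and two distinct
indices of equal parity differ by at least two. -/

namespace SG

variable {k : ℕ}

theorem adj_inl_inr {i j : Fin k} :
    (SG k).Adj (Sum.inl i) (Sum.inr j) ↔ (j : ℕ) = i ∨ (i : ℕ) + 2 ≤ j :=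
  Iff.rfl

theorem adj_inr_inl {i j : Fin k} :
    (SG k).Adj (Sum.inr j) (Sum.inl i) ↔ (j : ℕ) = i ∨ (i : ℕ) + 2 ≤ j :=
  Iff.rfl

theorem neighborSet_inl_subset {i j : Fin k} (h : (i : ℕ) = j ∨ (i : ℕ) + 2 ≤ j) :
    (SG k).neighborSet (Sum.inl j) ⊆ (SG k).neighborSet (Sum.inl i) := by
  rintro (t | t) ht
  · exact ht.elim
  · rw [SimpleGraph.mem_neighborSet, adj_inl_inr] at ht ⊢
    omega

theorem neighborSet_inr_subset {i j : Fin k} (h : (i : ℕ) = j ∨ (i : ℕ) + 2 ≤ j) :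
    (SG k).neighborSet (Sum.inr i) ⊆ (SG k).neighborSet (Sum.inr j) := by
  rintro (t | t) ht
  · rw [SimpleGraph.mem_neighborSet, adj_inr_inl] at ht ⊢
    omega
  · exact ht.elim

end SG

theorem Nat.eq_or_add_two_le_of_le_of_mod_two_eq {a b : ℕ} (hab : a ≤ b) (h : a % 2 = b % 2) :
    a = b ∨ a + 2 ≤ b := by
  omega

theorem Sk_bichain_general (k : ℕ) :
    ∀ i j : Fin k, (i : ℕ) % 2 = (j : ℕ) % 2 →
      ((SG k).neighborSet (Sum.inl i) ⊆ (SG k).neighborSet (Sum.inl j) ∨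
       (SG k).neighborSet (Sum.inl j) ⊆ (SG k).neighborSet (Sum.inl i)) ∧
      ((SG k).neighborSet (Sum.inr i) ⊆ (SG k).neighborSet (Sum.inr j) ∨
       (SG k).neighborSet (Sum.inr j) ⊆ (SG k).neighborSet (Sum.inr i)) := by
  intro i j hpar
  rcases le_total (i : ℕ) j with hij | hji
  · have hstep := Nat.eq_or_add_two_le_of_le_of_mod_two_eq hij hpar
    exact ⟨.inr (SG.neighborSet_inl_subset hstep), .inl (SG.neighborSet_inr_subset hstep)⟩
  · have hstep := Nat.eq_or_add_two_le_of_le_of_mod_two_eq hji hpar.symm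
    exact ⟨.inl (SG.neighborSet_inl_subset hstep), .inr (SG.neighborSet_inr_subset hstep)⟩

/-- `S_k` is a bichain graph: within each part of its
bipartition, the vertices whose (1-based) indices have the same parity have
neighbourhoods linearly ordered by inclusion — the odd-indexed vertices form
a chain, as do the even-indexed vertices. -/
theorem Sk_bichain (k : ℕ) (hk : 1 ≤ k) :
    ∀ i j : Fin k, (i : ℕ) % 2 = (j : ℕ) % 2 →
      ((SG k).neighborSet (Sum.inl i) ⊆ (SG k).neighborSet (Sum.inl j) ∨
       (SG k).neighborSet (Sum.inl j) ⊆ (SG k).neighborSet (Sum.inl i)) ∧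
      ((SG k).neighborSet (Sum.inr i) ⊆ (SG k).neighborSet (Sum.inr j) ∨
       (SG k).neighborSet (Sum.inr j) ⊆ (SG k).neighborSet (Sum.inr i)) :=
  Sk_bichain_general k
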